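/- arXiv:2108.11214 — 2 statements merged into one kernel-verified Lean document; each statement's English description precedes it below -/
import Mathlib

section
/- Let P = {v ∈ ℝ^n : ⟨u_i,v⟩ ≤ a_i, i = 1,…,r} be a pointed polyhedron with recession cone σ = Recc(P). Then the compactification P̄, defined as the closure of j(P) in N_ℝ(σ) where j : N_ℝ → N_ℝ(σ) sends v to the function u ↦ ⟨u,v⟩, is a compact subset of N_ℝ(σ). -/
open Topology

noncomputable section

/-- The standard pairing `⟨u, v⟩ = ∑ i, u i * v i` on `ℝⁿ`. -/
def dotp {n : ℕ} (u v : Fin n → ℝ) : ℝ := ∑ i, u i * v i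

/-- The polyhedral cone generated by the vectors `v 0, …, v (s-1)`. -/
def coneOf {n s : ℕ} (v : Fin s → (Fin n → ℝ)) : Set (Fin n → ℝ) :=
  {x | ∃ lam : Fin s → ℝ, (∀ j, 0 ≤ lam j) ∧ x = ∑ j, lam j • v j}

/-- A set is a polyhedral cone if it is finitely generated. -/
def IsPolyCone {n : ℕ} (σ : Set (Fin n → ℝ)) : Prop :=
  ∃ (s : ℕ) (v : Fin s → (Fin n → ℝ)), σ = coneOf v

/-- The polar cone `σ∨ = {u | ⟨u,v⟩ ≤ 0 ∀ v ∈ σ}`. -/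
def polarCone {n : ℕ} (σ : Set (Fin n → ℝ)) : Set (Fin n → ℝ) :=
  {u | ∀ v ∈ σ, dotp u v ≤ 0}

/-- A cone is pointed if it contains no nonzero linear subspace. -/
def IsPointed {n : ℕ} (σ : Set (Fin n → ℝ)) : Prop :=
  ∀ W : Submodule ℝ (Fin n → ℝ), (W : Set (Fin n → ℝ)) ⊆ σ → W = ⊥

/-- The partial compactification `N_ℝ(σ)`: the set of `ℝ₊`-equivariant monoid morphisms
`φ : σ∨ → ℝ ∪ {-∞}`, realized as `EReal`-valued functions on `σ∨` never taking the
value `+∞`.  (In `EReal` one has `(0 : EReal) * ⊥ = 0`, which is the convention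
`0 · (-∞) = 0`.)  It is topologized as a subspace of the product
`σ∨ → EReal`, i.e. with the topology of pointwise convergence. -/
def NRc {n : ℕ} (σ : Set (Fin n → ℝ)) : Set (↥(polarCone σ) → EReal) :=
  {φ | (∀ u, φ u ≠ ⊤) ∧
    (∀ (u u' : ↥(polarCone σ)) (h : (u : Fin n → ℝ) + (u' : Fin n → ℝ) ∈ polarCone σ),
      φ ⟨(u : Fin n → ℝ) + (u' : Fin n → ℝ), h⟩ = φ u + φ u') ∧
    (∀ (c : ℝ), 0 ≤ c → ∀ (u : ↥(polarCone σ)) (h : c • (u : Fin n → ℝ) ∈ polarCone σ),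
      φ ⟨c • (u : Fin n → ℝ), h⟩ = (c : EReal) * φ u)}

/-- The canonical map `N_ℝ → (σ∨ → EReal)`, `v ↦ (u ↦ ⟨u,v⟩)`; its image lies in `N_ℝ(σ)`. -/
def jmap {n : ℕ} (σ : Set (Fin n → ℝ)) (v : Fin n → ℝ) : ↥(polarCone σ) → EReal :=
  fun u => ((dotp (u : Fin n → ℝ) v : ℝ) : EReal)

/-!
By Farkas' lemma every `w ∈ σ∨` is a nonnegative combination `∑ λᵢ uᵢ` (the cone spanned by the
`uᵢ` is closed by conic Carathéodory, so Hahn–Banach separation applies), hence bounded above on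
`P` by `M w = ∑ λᵢ aᵢ`. So `j(P)` lies in `{φ ∈ N_ℝ(σ) | φ ≤ M}`, which is closed in the compact
product `σ∨ → EReal`: addition on `EReal` is continuous away from `+∞`, and multiplication by a
real constant is continuous everywhere (`0 * ⊥ = 0` included).
-/

open Set

section Cones

variable {n : ℕ}

lemma dotp_eq_dotProduct (u v : Fin n → ℝ) : dotp u v = u ⬝ᵥ v := rfl

lemma coneOf_eq_image {s : ℕ} (v : Fin s → Fin n → ℝ) :
    coneOf v = Fintype.linearCombination ℝ v '' Ici 0 := by
  ext x
  simp only [coneOf, mem_ofPred_eq, Fintype.linearCombination_apply, mem_image, mem_Ici,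
    Pi.le_def, Pi.zero_apply, eq_comm (a := x)]

lemma isClosed_coneOf_of_linearIndependent {s : ℕ} {v : Fin s → Fin n → ℝ}
    (hv : LinearIndependent ℝ v) : IsClosed (coneOf v) := by
  rw [coneOf_eq_image]
  exact (LinearMap.isClosedEmbedding_of_injective (LinearMap.ker_eq_bot.mpr
    (linearIndependent_iff_injective_fintypeLinearCombination.mp hv))).isClosedMap _ isClosed_Ici

lemma exists_sub_smul_nonneg_eq_zero {ι : Type*} [Fintype ι] {lam g : ι → ℝ} (hlam : 0 ≤ lam)
    (hg : ∃ j, 0 < g j) : ∃ (t : ℝ) (j : ι), 0 ≤ lam - t • g ∧ lam j - t * g j = 0 := by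
  classical
  obtain ⟨j, hj, hmin⟩ := (Finset.univ.filter fun i => 0 < g i).exists_min_image
    (fun i => lam i / g i) (by simpa [Finset.Nonempty] using hg)
  simp only [Finset.mem_filter, Finset.mem_univ, true_and] at hj hmin
  refine ⟨lam j / g j, j, fun i => ?_, by rw [div_mul_cancel₀ _ hj.ne', sub_self]⟩
  simp only [Pi.zero_apply, Pi.sub_apply, Pi.smul_apply, smul_eq_mul, sub_nonneg]
  rcases lt_or_ge 0 (g i) with hi | hi
  · exact (le_div_iff₀ hi).mp (hmin i hi)
  · exact (mul_nonpos_of_nonneg_of_nonpos (div_nonneg (hlam j) hj.le) hi).trans (hlam i)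

lemma exists_sum_smul_eq_zero_of_not_linearIndependent {ι E : Type*} [Fintype ι]
    [AddCommGroup E] [Module ℝ E] {v : ι → E} (hv : ¬LinearIndependent ℝ v) :
    ∃ g : ι → ℝ, ∑ i, g i • v i = 0 ∧ ∃ j, 0 < g j := by
  obtain ⟨g, hg, j, hj⟩ := Fintype.not_linearIndependent_iff.mp hv
  rcases hj.lt_or_gt with hj | hj
  · exact ⟨-g, by simp [neg_smul, hg], j, by simpa using hj⟩
  · exact ⟨g, hg, j, hj⟩

/-- Conic Carathéodory: moving the coefficients along a linear relation until one of them vanishes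
drops a generator. -/
lemma coneOf_eq_iUnion_coneOf_succAbove {s : ℕ} {v : Fin (s + 1) → Fin n → ℝ}
    (hv : ¬LinearIndependent ℝ v) : coneOf v = ⋃ j : Fin (s + 1), coneOf (v ∘ j.succAbove) := by
  ext x
  simp only [mem_iUnion]
  constructor
  · rintro ⟨lam, hlam, rfl⟩
    obtain ⟨g, hg, hgpos⟩ := exists_sum_smul_eq_zero_of_not_linearIndependent hv
    obtain ⟨t, j, hnonneg, hj⟩ := exists_sub_smul_nonneg_eq_zero (lam := lam) hlam hgpos
    refine ⟨j, fun i => (lam - t • g) (j.succAbove i), fun i => hnonneg _, ?_⟩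
    calc ∑ i, lam i • v i = ∑ i, (lam - t • g) i • v i := by
          simp [sub_smul, mul_smul, Finset.sum_sub_distrib, ← Finset.smul_sum, hg]
      _ = _ := by
          rw [Fin.sum_univ_succAbove _ j]
          simp [hj]
  · rintro ⟨j, lam, hlam, rfl⟩
    refine ⟨Fin.insertNth j 0 lam, fun i => ?_, ?_⟩
    · induction i using j.succAboveCases <;> simp [hlam]
    · simp [Fin.sum_univ_succAbove _ j]

lemma isClosed_coneOf : ∀ {s : ℕ} (v : Fin s → Fin n → ℝ), IsClosed (coneOf v)
  | 0, v => isClosed_coneOf_of_linearIndependent linearIndependent_empty_type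
  | s + 1, v => by
    by_cases hv : LinearIndependent ℝ v
    · exact isClosed_coneOf_of_linearIndependent hv
    · rw [coneOf_eq_iUnion_coneOf_succAbove hv]
      exact isClosed_iUnion_of_finite fun j => isClosed_coneOf _

lemma strongDual_apply_eq_dotp (f : StrongDual ℝ (Fin n → ℝ)) (y : Fin n → ℝ) :
    f y = dotp (fun i => f (Pi.single i 1)) y := by
  conv_lhs => rw [pi_eq_sum_univ' y]
  simp [dotp, mul_comm]

def coneOfProperCone {s : ℕ} (v : Fin s → Fin n → ℝ) : ProperCone ℝ (Fin n → ℝ) where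
  toSubmodule := (PointedCone.positive ℝ (Fin s → ℝ)).map (Fintype.linearCombination ℝ v)
  isClosed' := by
    convert isClosed_coneOf v
    rw [coneOf_eq_image]
    exact PointedCone.coe_map _ _

lemma coe_coneOfProperCone {s : ℕ} (v : Fin s → Fin n → ℝ) :
    (coneOfProperCone v : Set (Fin n → ℝ)) = coneOf v := by
  rw [coneOf_eq_image]; exact PointedCone.coe_map _ _

lemma mem_coneOf_self {s : ℕ} (v : Fin s → Fin n → ℝ) (j : Fin s) : v j ∈ coneOf v := by
  classical
  exact ⟨Pi.single j 1, fun i => by by_cases h : i = j <;> simp [h], by simp [Pi.single_apply]⟩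

lemma mem_coneOf_of_mem_polarCone {s : ℕ} (w : Fin s → Fin n → ℝ) {x : Fin n → ℝ}
    (hx : x ∈ polarCone {v | ∀ j, dotp (w j) v ≤ 0}) : x ∈ coneOf w := by
  by_contra hxw
  rw [← coe_coneOfProperCone] at hxw
  obtain ⟨f, hfw, hfx⟩ := (coneOfProperCone w).hyperplane_separation_point hxw
  have hf : ∀ z, dotp z (-fun i => f (Pi.single i 1)) = -f z := fun z => by
    rw [strongDual_apply_eq_dotp, dotp_eq_dotProduct, dotp_eq_dotProduct, dotProduct_neg,
      dotProduct_comm]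
  have hx' := hx _ fun j => by
    rw [hf, neg_nonpos]
    exact hfw _ (by rw [← SetLike.mem_coe, coe_coneOfProperCone]; exact mem_coneOf_self w j)
  rw [hf] at hx'
  linarith

lemma bddAbove_dotp_image {r : ℕ} (u : Fin r → Fin n → ℝ) (a : Fin r → ℝ) {w : Fin n → ℝ}
    (hw : w ∈ polarCone {v | ∀ i, dotp (u i) v ≤ 0}) :
    BddAbove (dotp w '' {v | ∀ i, dotp (u i) v ≤ a i}) := by
  obtain ⟨lam, hlam, rfl⟩ := mem_coneOf_of_mem_polarCone u hw
  refine ⟨∑ i, lam i * a i, ?_⟩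
  rintro _ ⟨v, hv, rfl⟩
  simp only [dotp_eq_dotProduct, sum_dotProduct, smul_dotProduct, smul_eq_mul] at hv ⊢
  exact Finset.sum_le_sum fun i _ => mul_le_mul_of_nonneg_left (hv i) (hlam i)

end Cones

section EReal

variable {ι : Type*}

lemma EReal.continuous_coe_mul (c : ℝ) : Continuous fun x : EReal => (c : EReal) * x := by
  rcases eq_or_ne c 0 with rfl | hc
  · simpa using continuous_const
  · have hc' : (c : EReal) ≠ 0 := EReal.coe_ne_zero.mpr hc
    refine continuous_iff_continuousAt.mpr fun x => ?_
    exact (EReal.continuousAt_mul (Or.inl hc') (Or.inl hc') (Or.inl (EReal.coe_ne_bot c))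
      (Or.inl (EReal.coe_ne_top c))).comp (continuous_const.prodMk continuous_id).continuousAt

lemma isClosed_setOf_apply_eq_coe_mul (c : ℝ) (i k : ι) :
    IsClosed {φ : ι → EReal | φ k = c * φ i} :=
  isClosed_eq (continuous_apply k) ((EReal.continuous_coe_mul c).comp (continuous_apply i))

lemma isClosed_Iic_inter_setOf_apply_eq_add (M : ι → ℝ) (i j k : ι) :
    IsClosed (Iic (fun l => (M l : EReal)) ∩ {φ : ι → EReal | φ k = φ i + φ j}) := by
  have hadd : ContinuousOn (fun φ : ι → EReal => φ i + φ j) (Iic fun l => (M l : EReal)) :=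
    fun φ hφ => ContinuousAt.continuousWithinAt <|
      ContinuousAt.comp (f := fun φ : ι → EReal => (φ i, φ j))
        (EReal.continuousAt_add (Or.inl (ne_top_of_le_ne_top (EReal.coe_ne_top _) (hφ i)))
          (Or.inr (ne_top_of_le_ne_top (EReal.coe_ne_top _) (hφ j))))
        ((continuous_apply i).prodMk (continuous_apply j)).continuousAt
  exact ((continuous_apply k).continuousOn.prodMk hadd).preimage_isClosed_of_isClosed
    isClosed_Iic isClosed_diagonal

end EReal

section Compactification

variable {n : ℕ}

lemma isCompact_NRc_inter_Iic (σ : Set (Fin n → ℝ)) (M : polarCone σ → ℝ) :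
    IsCompact (NRc σ ∩ Iic fun w => (M w : EReal)) := by
  refine IsClosed.isCompact <| isClosed_of_closure_subset fun φ hφ => ?_
  have mem {t} (ht : IsClosed t) (hsub : NRc σ ∩ Iic (fun w => (M w : EReal)) ⊆ t) : φ ∈ t :=
    closure_minimal hsub ht hφ
  have hle : φ ∈ Iic fun w => (M w : EReal) := mem isClosed_Iic inter_subset_right
  refine ⟨⟨fun w => ne_top_of_le_ne_top (EReal.coe_ne_top _) (hle w), fun u u' h => ?_,
    fun c hc u h => ?_⟩, hle⟩
  · exact (mem (isClosed_Iic_inter_setOf_apply_eq_add M u u' ⟨_, h⟩)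
      fun ψ hψ => ⟨hψ.2, hψ.1.2.1 u u' h⟩).2
  · exact mem (isClosed_setOf_apply_eq_coe_mul c u ⟨_, h⟩) fun ψ hψ => hψ.1.2.2 c hc u h

lemma jmap_mem_NRc (σ : Set (Fin n → ℝ)) (v : Fin n → ℝ) : jmap σ v ∈ NRc σ := by
  refine ⟨fun u => EReal.coe_ne_top _, fun u u' _ => ?_, fun c _ u _ => ?_⟩
  · simp only [jmap, dotp_eq_dotProduct, add_dotProduct, EReal.coe_add]
  · simp only [jmap, dotp_eq_dotProduct, smul_dotProduct, smul_eq_mul, EReal.coe_mul]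

end Compactification

theorem stmt2_general {n r : ℕ} (u : Fin r → (Fin n → ℝ)) (a : Fin r → ℝ)
    (P σ : Set (Fin n → ℝ))
    (hP : P = {v | ∀ i, dotp (u i) v ≤ a i})
    (hσ : σ = {v | ∀ i, dotp (u i) v ≤ 0}) :
    IsCompact (closure ((fun φ : ↥(NRc σ) => (φ : ↥(polarCone σ) → EReal)) ⁻¹' (jmap σ '' P))) := by
  choose M hM using fun w : polarCone σ => bddAbove_dotp_image u a (by rw [← hσ]; exact w.2)
  have hPK : jmap σ '' P ⊆ NRc σ ∩ Iic fun w => (M w : EReal) := by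
    rintro _ ⟨v, hv, rfl⟩
    exact ⟨jmap_mem_NRc σ v, fun w => EReal.coe_le_coe_iff.mpr (hM w ⟨v, hP ▸ hv, rfl⟩)⟩
  have hK := Topology.IsInducing.subtypeVal.isCompact_preimage' (isCompact_NRc_inter_Iic σ M)
    (fun φ hφ => ⟨⟨φ, hφ.1⟩, rfl⟩)
  exact (hK.closure_of_subset (preimage_mono hPK) :)

/-- Let `P = {v | ⟨u_i, v⟩ ≤ a_i}` be a pointed polyhedron with recession
cone `σ = Recc(P) = {v | ⟨u_i, v⟩ ≤ 0}`.  Then the compactification `P̄`, i.e. the closure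
of `j(P)` inside the subspace `N_ℝ(σ)` of `σ∨ → EReal` (where `j(v)(u) = ⟨u,v⟩`), is a
compact subset of `N_ℝ(σ)`. -/
theorem stmt2 {n r : ℕ} (u : Fin r → (Fin n → ℝ)) (a : Fin r → ℝ)
    (P σ : Set (Fin n → ℝ))
    (hP : P = {v | ∀ i, dotp (u i) v ≤ a i})
    (hσ : σ = {v | ∀ i, dotp (u i) v ≤ 0})
    (hpt : IsPointed σ) :
    IsCompact (closure ((fun φ : ↥(NRc σ) => (φ : ↥(polarCone σ) → EReal)) ⁻¹' (jmap σ '' P))) :=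
  stmt2_general u a P σ hP hσ
end
end

section
/- Let σ = Cone(v_1,…,v_s) ⊆ ℝ^n be a rational polyhedral cone, i.e. v_1,…,v_s ∈ ℤ^n. Then its polar cone σ∨ = {u ∈ (ℝ^n)* : ⟨u,v⟩ ≤ 0 for all v ∈ σ} is again a rational polyhedral cone: there exist finitely many u_1,…,u_r ∈ ℤ^n (identified with integral linear functionals) such that σ∨ = Cone(u_1,…,u_r). -/
/-!
Fourier–Motzkin elimination. If `f` is a linear functional, `Cone(s) ∩ {f ≤ 0}` is generated by
the `w ∈ s` with `f w ≤ 0` together with the vectors `f v • w - f w • v` for `f v > 0 ≥ f w`;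
when `s` and `f` are integral, so are these new generators. The polar of `Cone(G)` is the
intersection of the half-spaces `{x ⬝ᵥ g ≤ 0}`, `g ∈ G`, so starting from
`ℝⁿ = Cone(±eᵢ)` and cutting by one half-space at a time yields integral generators of `σ∨`.
-/

open Topology

noncomputable section

/-- The real vector associated to an integer vector. -/
def intCastVec {n : ℕ} (u : Fin n → ℤ) : Fin n → ℝ := fun i => (u i : ℝ)

open Set Submodule

namespace PointedCone

variable {𝕜 E : Type*} [Field 𝕜] [LinearOrder 𝕜] [IsStrictOrderedRing 𝕜]
  [AddCommGroup E] [Module 𝕜 E] (f : E →ₗ[𝕜] 𝕜) {s t : Set E} {x y : E}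

lemma map_nonpos_of_mem_hull (hs : ∀ v ∈ s, f v ≤ 0) (hx : x ∈ hull 𝕜 s) :
    f x ≤ 0 := by
  induction hx using span_induction with
  | mem v hv => exact hs v hv
  | zero => simp
  | add _ _ _ _ h h' => rw [map_add]; linarith
  | smul c _ _ h =>
    rw [← Nonneg.coe_smul, map_smul, smul_eq_mul]
    exact mul_nonpos_of_nonneg_of_nonpos c.2 h

lemma eq_zero_or_pos_of_mem_hull (hs : ∀ v ∈ s, 0 < f v) (hx : x ∈ hull 𝕜 s) :
    x = 0 ∨ 0 < f x := by
  induction hx using span_induction with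
  | mem v hv => exact .inr (hs v hv)
  | zero => exact .inl rfl
  | add x y _ _ hx hy =>
    rcases hx with rfl | hx
    · simpa using hy
    rcases hy with rfl | hy
    · simpa using Or.inr hx
    exact .inr (by rw [map_add]; positivity)
  | smul c x _ h =>
    rw [← Nonneg.coe_smul, map_smul, smul_eq_mul]
    rcases c.2.eq_or_lt with hc | hc
    · simp [← hc]
    rcases h with rfl | h
    · simp
    exact .inr (mul_pos hc h)

lemma smul_sub_smul_mem_hull_image2 (hx : x ∈ hull 𝕜 s) (hy : y ∈ hull 𝕜 t) :
    f x • y - f y • x ∈ hull 𝕜 (image2 (fun v w => f v • w - f w • v) s t) := by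
  induction hx using span_induction with
  | mem v hv =>
    induction hy using span_induction with
    | mem w hw => exact subset_hull (mem_image2_of_mem hv hw)
    | zero => simp
    | add w w' _ _ h h' =>
      convert add_mem h h' using 1
      simp only [map_add]
      module
    | smul c w _ h =>
      convert Submodule.smul_mem _ c h using 1
      simp only [← Nonneg.coe_smul, map_smul, smul_eq_mul]
      module
  | zero => simp
  | add x x' _ _ h h' =>
    convert add_mem h h' using 1
    simp only [map_add]
    module
  | smul c x _ h =>
    convert Submodule.smul_mem _ c h using 1
    simp only [← Nonneg.coe_smul, map_smul, smul_eq_mul]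
    module

def fourierMotzkin (s : Set E) : Set E :=
  {w ∈ s | f w ≤ 0} ∪
    image2 (fun v w => f v • w - f w • v) {v ∈ s | 0 < f v} {w ∈ s | f w ≤ 0}

theorem hull_inter_setOf_nonpos (s : Set E) :
    (hull 𝕜 s : Set E) ∩ {x | f x ≤ 0} = hull 𝕜 (fourierMotzkin f s) := by
  apply Subset.antisymm
  · rintro x ⟨hx, hfx⟩
    have hsplit : s = {v ∈ s | 0 < f v} ∪ {w ∈ s | f w ≤ 0} := by
      ext v
      simp only [mem_union, mem_sep_iff, ← and_or_left, iff_self_and]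
      exact fun _ => lt_or_ge 0 (f v)
    rw [SetLike.mem_coe, hsplit, hull, span_union, mem_sup] at hx
    obtain ⟨p, hp, q, hq, rfl⟩ := hx
    have hfpq : f p + f q ≤ 0 := by simpa using hfx
    have hq_le : hull 𝕜 {w ∈ s | f w ≤ 0} ≤ hull 𝕜 (fourierMotzkin f s) :=
      span_mono subset_union_left
    rcases eq_zero_or_pos_of_mem_hull f (fun v hv => hv.2) hp with rfl | hfp
    · simpa using hq_le hq
    have hfq : f q < 0 := by linarith
    -- `p + t • q` with `t = f p / -f q ∈ (0, 1]` lies on `f = 0`; add `(1 - t) • q`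
    have hpq : p + q = (-f q)⁻¹ • (f p • q - f q • p) + (1 - f p / -f q) • q := by
      have := hfq.ne
      match_scalars
      · field_simp
      · field_simp
        ring
    rw [SetLike.mem_coe, hpq]
    refine add_mem (PointedCone.smul_mem _ (inv_nonneg.mpr (by linarith)) ?_)
      (PointedCone.smul_mem _ ?_ (hq_le hq))
    · exact span_mono subset_union_right (smul_sub_smul_mem_hull_image2 f hp hq)
    · rw [sub_nonneg, div_le_one (by linarith)]
      linarith
  · intro x hx
    have hgen : fourierMotzkin f s ⊆ hull 𝕜 s ∩ {x | f x ≤ 0} := by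
      rintro _ (⟨hw, hfw⟩ | ⟨v, ⟨hv, hfv⟩, w, ⟨hw, hfw⟩, rfl⟩)
      · exact ⟨subset_hull hw, hfw⟩
      refine ⟨?_, by simp [mul_comm]⟩
      beta_reduce
      rw [sub_eq_add_neg, ← neg_smul]
      exact add_mem (PointedCone.smul_mem _ hfv.le (subset_hull hw))
        (PointedCone.smul_mem _ (neg_nonneg.mpr hfw) (subset_hull hv))
    exact ⟨span_le.mpr (fun w hw => (hgen hw).1) hx,
      map_nonpos_of_mem_hull f (fun w hw => (hgen hw).2) hx⟩

end PointedCone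

section Rational

open PointedCone

variable {n : ℕ}

lemma intCastVec_injective : Function.Injective (intCastVec (n := n)) :=
  fun _ _ h => funext fun i => Int.cast_injective (congrFun h i)

lemma dotProduct_intCastVec (p q : Fin n → ℤ) :
    intCastVec p ⬝ᵥ intCastVec q = ((p ⬝ᵥ q : ℤ) : ℝ) := by
  simp [dotProduct, intCastVec]

lemma intCastVec_smul_sub_smul (k m : ℤ) (p q : Fin n → ℤ) :
    intCastVec (k • q - m • p) = (k : ℝ) • intCastVec q - (m : ℝ) • intCastVec p := by
  funext i; simp [intCastVec]

def IsRatPolyCone (C : Set (Fin n → ℝ)) : Prop :=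
  ∃ G : Set (Fin n → ℝ), G.Finite ∧ G ⊆ range intCastVec ∧ C = hull ℝ G

lemma coneOf_eq_hull {s : ℕ} (v : Fin s → Fin n → ℝ) : coneOf v = hull ℝ (range v) := by
  ext x
  rw [SetLike.mem_coe, mem_span_range_iff_exists_fun]
  constructor
  · rintro ⟨lam, hlam, rfl⟩
    exact ⟨fun j => ⟨lam j, hlam j⟩, by simp [Nonneg.mk_smul]⟩
  · rintro ⟨c, rfl⟩
    exact ⟨fun j => c j, fun j => (c j).2, by simp [Nonneg.coe_smul]⟩

lemma polarCone_hull (G : Set (Fin n → ℝ)) :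
    polarCone (hull ℝ G) = {x | ∀ g ∈ G, x ⬝ᵥ g ≤ 0} := by
  ext x
  exact ⟨fun hx g hg => hx g (subset_hull hg),
    fun hx _ hv => map_nonpos_of_mem_hull (dotProductBilin ℝ ℝ x) hx hv⟩

lemma isRatPolyCone_univ : IsRatPolyCone (univ : Set (Fin n → ℝ)) := by
  refine ⟨range (fun i => Pi.single i 1) ∪ range (fun i => -Pi.single i 1),
    (finite_range _).union (finite_range _), ?_, ?_⟩
  · rintro _ (⟨i, rfl⟩ | ⟨i, rfl⟩)
    · exact ⟨Pi.single i 1, funext fun j => by simp [intCastVec, Pi.single_apply]⟩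
    · exact ⟨-Pi.single i 1, funext fun j => by simp [intCastVec, Pi.single_apply]⟩
  · refine (eq_univ_of_forall fun x => ?_).symm
    rw [SetLike.mem_coe, pi_eq_sum_univ' x]
    refine sum_mem fun i _ => ?_
    rcases le_total 0 (x i) with hxi | hxi
    · exact PointedCone.smul_mem _ hxi (subset_hull (.inl ⟨i, rfl⟩))
    · rw [← neg_neg (x i), neg_smul, ← smul_neg]
      exact PointedCone.smul_mem _ (neg_nonneg.mpr hxi) (subset_hull (.inr ⟨i, rfl⟩))

lemma IsRatPolyCone.inter_setOf_dotProduct_nonpos {C : Set (Fin n → ℝ)}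
    (hC : IsRatPolyCone C) {a : Fin n → ℝ} (ha : a ∈ range intCastVec) :
    IsRatPolyCone (C ∩ {x | x ⬝ᵥ a ≤ 0}) := by
  obtain ⟨G, hGfin, hGint, rfl⟩ := hC
  obtain ⟨b, rfl⟩ := ha
  set f := (dotProductBilin ℝ ℝ).flip (intCastVec b)
  refine ⟨fourierMotzkin f G, (hGfin.sep _).union ((hGfin.sep _).image2 _ (hGfin.sep _)), ?_,
    hull_inter_setOf_nonpos f G⟩
  rintro _ (⟨hw, -⟩ | ⟨_, ⟨hv, -⟩, _, ⟨hw, -⟩, rfl⟩)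
  · exact hGint hw
  obtain ⟨p, rfl⟩ := hGint hv
  obtain ⟨q, rfl⟩ := hGint hw
  refine ⟨(p ⬝ᵥ b) • q - (q ⬝ᵥ b) • p, ?_⟩
  rw [intCastVec_smul_sub_smul]
  simp [f, dotProduct_intCastVec]

lemma IsRatPolyCone.polarCone {σ : Set (Fin n → ℝ)} (hσ : IsRatPolyCone σ) :
    IsRatPolyCone (polarCone σ) := by
  obtain ⟨G, hGfin, hGint, rfl⟩ := hσ
  rw [polarCone_hull]
  induction G, hGfin using Set.Finite.induction_on with
  | empty => simpa using isRatPolyCone_univ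
  | @insert a G _ _ ih =>
    have hset : {x | ∀ g ∈ insert a G, x ⬝ᵥ g ≤ 0} =
        {x | ∀ g ∈ G, x ⬝ᵥ g ≤ 0} ∩ {x | x ⬝ᵥ a ≤ 0} := by
      ext x; simp [and_comm]
    rw [hset]
    exact (ih ((subset_insert a G).trans hGint)).inter_setOf_dotProduct_nonpos
      (hGint (mem_insert a G))

lemma IsRatPolyCone.exists_eq_coneOf {C : Set (Fin n → ℝ)} (hC : IsRatPolyCone C) :
    ∃ (r : ℕ) (u : Fin r → Fin n → ℤ), C = coneOf fun j => intCastVec (u j) := by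
  obtain ⟨G, hGfin, hGint, rfl⟩ := hC
  obtain ⟨r, u, -, hu⟩ := (hGfin.preimage intCastVec_injective.injOn).fin_param
  refine ⟨r, u, ?_⟩
  rw [coneOf_eq_hull, range_comp', hu, image_preimage_eq_of_subset hGint]

end Rational

/-- The polar cone of a rational polyhedral cone
`σ = Cone(v_1, …, v_s)` with `v_j ∈ ℤⁿ` is again a rational polyhedral cone: there are
finitely many `u_1, …, u_r ∈ ℤⁿ` with `σ∨ = Cone(u_1, …, u_r)`. -/
theorem stmt5 {n s : ℕ} (v : Fin s → (Fin n → ℤ)) (σ : Set (Fin n → ℝ))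
    (hσ : σ = coneOf fun j => intCastVec (v j)) :
    ∃ (r : ℕ) (u : Fin r → (Fin n → ℤ)),
      polarCone σ = coneOf fun j => intCastVec (u j) := by
  have hrat : IsRatPolyCone σ :=
    ⟨range fun j => intCastVec (v j), finite_range _, fun _ ⟨j, hj⟩ => ⟨v j, hj⟩,
      hσ.trans (coneOf_eq_hull _)⟩
  exact hrat.polarCone.exists_eq_coneOf

end
end
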